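/- arXiv:2210.08215 — 2 statements merged into one kernel-verified Lean document; each statement's English description precedes it below -/
import Mathlib

section
/- Let V be a finite-dimensional complex vector space equipped with a non-degenerate symmetric ℂ-bilinear form C. Then there exists a Hermitian metric h on V which is compatible with C. -/
noncomputable section

variable {V : Type*} [AddCommGroup V] [Module ℂ V] [FiniteDimensional ℂ V]

/-- `h` is a Hermitian metric on the complex vector space `V`:
it is additive and `ℂ`-linear in the first argument, Hermitian-symmetric
(hence conjugate-linear in the second argument), and positive definite. -/
def IsHermitianMetric (h : V → V → ℂ) : Prop :=
  (∀ u v w : V, h (u + v) w = h u w + h v w) ∧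
  (∀ (a : ℂ) (u v : V), h (a • u) v = a * h u v) ∧
  (∀ u v : V, h u v = starRingEnd ℂ (h v u)) ∧
  (∀ v : V, v ≠ 0 → 0 < (h v v).re)

/-- `C` is a non-degenerate symmetric `ℂ`-bilinear form on `V`. -/
def IsNondegSymmBilin (C : V → V → ℂ) : Prop :=
  (∀ u v w : V, C (u + v) w = C u w + C v w) ∧
  (∀ (a : ℂ) (u v : V), C (a • u) v = a * C u v) ∧
  (∀ u v : V, C u v = C v u) ∧
  (∀ v : V, (∀ u : V, C v u = 0) → v = 0)

/-- `Ψ_h : V → V^*`, `Ψ_h(u)(v) = h(v,u)`; it is conjugate-linear in `u`. -/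
def PsiH (h : V → V → ℂ) : V → V → ℂ := fun u v => h v u

/-- The dual Hermitian metric `h^∨` on `V^* `:
`h^∨(f,g) = h(Ψ_h⁻¹(g), Ψ_h⁻¹(f))`. -/
def dualMetric (h : V → V → ℂ) : (V → ℂ) → (V → ℂ) → ℂ :=
  fun f g => h (Function.invFun (PsiH h) g) (Function.invFun (PsiH h) f)

/-- `h` is compatible with the form `C` if `Ψ_C : V → V^*`, `Ψ_C(u) = C(u,·) = C u`,
is isometric with respect to `h` and `h^∨`, i.e. `h^∨(Ψ_C u, Ψ_C v) = h(u,v)`. -/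
def Compatible (h C : V → V → ℂ) : Prop :=
  ∀ u v : V, dualMetric h (C u) (C v) = h u v

/-!
Over `ℂ` a non-degenerate symmetric bilinear form has an orthonormal basis `e` (diagonalise it,
then rescale by square roots of the diagonal entries), so `C(u, w) = ∑ uᵢ wᵢ` in `e`-coordinates.
Take `h(u, w) = ∑ uᵢ w̄ᵢ` and let `σ` conjugate the coordinates. Then `Ψ_h(σ u) = Ψ_C(u)`, hence
`h^∨(Ψ_C u, Ψ_C w) = h(σ w, σ u) = h(u, w)`.
-/

open Module ComplexConjugate
open LinearMap (BilinForm)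

namespace LinearMap.BilinForm

variable {K E : Type*} [Field K] [AddCommGroup E] [Module K E]

theorem exists_basis_toMatrix_eq_one [IsAlgClosed K] [Invertible (2 : K)] [FiniteDimensional K E]
    {B : BilinForm K E} (hsymm : B.IsSymm) (hsep : B.SeparatingLeft) :
    ∃ e : Basis (Fin (finrank K E)) K E, toMatrix e B = 1 := by
  obtain ⟨v, hv⟩ := exists_orthogonal_basis (isSymm_iff.1 hsymm)
  have hdiag : ∀ i, B (v i) (v i) ≠ 0 := hv.not_isOrtho_basis_self_of_separatingLeft hsep
  choose s hs using fun i => IsAlgClosed.exists_eq_mul_self (B (v i) (v i))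
  have hs0 : ∀ i, s i ≠ 0 := fun i h0 => hdiag i (by rw [hs i, h0, mul_zero])
  refine ⟨v.unitsSMul fun i => (Units.mk0 (s i) (hs0 i))⁻¹, ?_⟩
  ext i j
  simp only [toMatrix_apply, Basis.unitsSMul_apply, Units.smul_def, map_smul, smul_apply,
    smul_eq_mul, Units.val_inv_eq_inv_val, Units.val_mk0, Matrix.one_apply]
  split_ifs with hij
  · subst hij
    rw [hs i]
    field_simp [hs0 i]
  · rw [hv hij, mul_zero, mul_zero]

theorem apply_eq_sum_repr_mul_repr {ι : Type*} [Fintype ι] [DecidableEq ι] {B : BilinForm K E}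
    {e : Basis ι K E} (he : toMatrix e B = 1) (u w : E) :
    B u w = ∑ i, e.repr u i * e.repr w i := by
  rw [← Matrix.toBilin_toMatrix e B, he, Matrix.toBilin_apply]
  simp [Matrix.one_apply]

end LinearMap.BilinForm

section HermitianMetric

variable {E : Type*} [AddCommGroup E] [Module ℂ E]

theorem IsHermitianMetric.psiH_injective {h : E → E → ℂ} (hh : IsHermitianMetric h) :
    Function.Injective (PsiH h) := by
  obtain ⟨hadd, hsmul, hconj, hpos⟩ := hh
  intro a b hab
  have hsub : ∀ v, h (a - b) v = 0 := fun v => by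
    have hv : h v a = h v b := congrFun hab v
    have hneg : h (-b) v = - h b v := by simpa using hsmul (-1) b v
    rw [sub_eq_add_neg, hadd, hneg, hconj a, hconj b, hv, add_neg_cancel]
  by_contra hne
  simpa [hsub] using hpos (a - b) (sub_ne_zero.mpr hne)

theorem IsHermitianMetric.dualMetric_psiH {h : E → E → ℂ} (hh : IsHermitianMetric h) (u w : E) :
    dualMetric h (PsiH h u) (PsiH h w) = h w u := by
  simp only [dualMetric, Function.leftInverse_invFun hh.psiH_injective _]

end HermitianMetric

namespace Module.Basis

variable {ι E : Type*} [Fintype ι] [AddCommGroup E] [Module ℂ E] (e : Basis ι ℂ E)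

def coordHermitian (u w : E) : ℂ := ∑ i, e.repr u i * conj (e.repr w i)

def coordConj (u : E) : E := e.equivFun.symm fun i => conj (e.repr u i)

@[simp]
theorem repr_coordConj (u : E) (i : ι) : e.repr (e.coordConj u) i = conj (e.repr u i) := by
  rw [← e.equivFun_apply, coordConj, LinearEquiv.apply_symm_apply]

theorem coordHermitian_self (u : E) :
    e.coordHermitian u u = ∑ i, (Complex.normSq (e.repr u i) : ℂ) := by
  simp only [coordHermitian, Complex.mul_conj]

theorem isHermitianMetric_coordHermitian : IsHermitianMetric e.coordHermitian := by
  refine ⟨fun u v w => ?_, fun a u v => ?_, fun u v => ?_, fun v hv => ?_⟩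
  · simp [coordHermitian, add_mul, Finset.sum_add_distrib]
  · simp [coordHermitian, Finset.mul_sum, mul_assoc]
  · simp [coordHermitian, mul_comm]
  · obtain ⟨i, hi⟩ := Finsupp.ne_iff.1 ((LinearEquiv.map_ne_zero_iff e.repr).2 hv)
    rw [coordHermitian_self, ← Complex.ofReal_sum, Complex.ofReal_re]
    exact Finset.sum_pos' (fun i _ => Complex.normSq_nonneg _)
      ⟨i, Finset.mem_univ i, Complex.normSq_pos.2 hi⟩

theorem coordHermitian_coordConj_right (u w : E) :
    e.coordHermitian u (e.coordConj w) = ∑ i, e.repr u i * e.repr w i := by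
  simp [coordHermitian]

theorem coordHermitian_coordConj (u w : E) :
    e.coordHermitian (e.coordConj u) (e.coordConj w) = e.coordHermitian w u := by
  simp [coordHermitian, mul_comm]

end Module.Basis

def IsNondegSymmBilin.toBilinForm {E : Type*} [AddCommGroup E] [Module ℂ E] {C : E → E → ℂ}
    (hC : IsNondegSymmBilin C) : BilinForm ℂ E :=
  LinearMap.mk₂ ℂ C hC.1 hC.2.1 (fun u v w => by rw [hC.2.2.1, hC.1, hC.2.2.1 v, hC.2.2.1 w])
    (fun a u v => by rw [hC.2.2.1, hC.2.1, hC.2.2.1 v, smul_eq_mul])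

/-- Any non-degenerate symmetric bilinear form `C` on a finite-dimensional complex
vector space admits a compatible Hermitian metric. -/
theorem exists_compatible_hermitianMetric
    (C : V → V → ℂ) (hC : IsNondegSymmBilin C) :
    ∃ h : V → V → ℂ, IsHermitianMetric h ∧ Compatible h C := by
  have hsymm : ∀ u w, C u w = C w u := hC.2.2.1
  obtain ⟨e, he⟩ := LinearMap.BilinForm.exists_basis_toMatrix_eq_one
    (B := hC.toBilinForm) (LinearMap.BilinForm.isSymm_def.2 hsymm) hC.2.2.2
  have hpsi : ∀ u, PsiH e.coordHermitian (e.coordConj u) = C u := fun u => funext fun v => by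
    rw [PsiH, e.coordHermitian_coordConj_right, hsymm]
    exact (LinearMap.BilinForm.apply_eq_sum_repr_mul_repr he v u).symm
  refine ⟨e.coordHermitian, e.isHermitianMetric_coordHermitian, fun u w => ?_⟩
  rw [← hpsi u, ← hpsi w, e.isHermitianMetric_coordHermitian.dualMetric_psiH,
    e.coordHermitian_coordConj]
end
end

section
/- Let V be a finite-dimensional complex vector space, ω a symplectic (non-degenerate alternating) ℂ-bilinear form on V, and h a Hermitian metric on V. Then h is compatible with ω if and only if there exists a basis (v_1, …, v_{2m}) of V (so dim V = 2m is even) which is orthonormal with respect to h (h(v_i, v_j) = δ_{ij}) and symplectic with respect to ω (ω(v_{2i−1}, v_{2i}) = 1 = −ω(v_{2i}, v_{2i−1}) for 1 ≤ i ≤ m, and ω(v_i, v_j) = 0 for all other pairs i, j). -/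
noncomputable section

variable {V : Type*} [AddCommGroup V] [Module ℂ V] [FiniteDimensional ℂ V]

/-- `ω` is a symplectic (non-degenerate alternating) `ℂ`-bilinear form on `V`. -/
def IsSymplecticForm (ω : V → V → ℂ) : Prop :=
  (∀ u v w : V, ω (u + v) w = ω u w + ω v w) ∧
  (∀ (a : ℂ) (u v : V), ω (a • u) v = a * ω u v) ∧
  (∀ u v w : V, ω u (v + w) = ω u v + ω u w) ∧
  (∀ (a : ℂ) (u v : V), ω u (a • v) = a * ω u v) ∧
  (∀ v : V, ω v v = 0) ∧
  (∀ v : V, (∀ u : V, ω v u = 0) → v = 0)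

/-!
Write `h` as an inner product. Then `ω u w = ⟪J u, w⟫` for a conjugate-linear `J = Ψ_h⁻¹ ∘ Ψ_ω`,
and compatibility says exactly that `J` is antiunitary. As `ω` is alternating, an antiunitary `J`
satisfies `J² = -1`, so if `u₁, J u₁, …, u_k, J u_k` is orthonormal and `u` is a unit vector
orthogonal to it, then `J u` is orthogonal to it and to `u`. Extending such a family until it spans
gives an orthonormal basis in which `ω` has the standard block form. Conversely, in a unitary
symplectic basis `J` maps each basis vector to another one up to sign, so it is antiunitary.
-/

open scoped InnerProductSpace
open Module

abbrev IsHermitianMetric.innerProductCore {W : Type*} [AddCommGroup W] [Module ℂ W]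
    {h : W → W → ℂ} (hh : IsHermitianMetric h) : InnerProductSpace.Core ℂ W :=
  have hadd := hh.1
  have hsmul := hh.2.1
  have hsymm := hh.2.2.1
  have hpos := hh.2.2.2
  { inner x y := h y x
    conj_inner_symm x y := (hsymm y x).symm
    re_inner_nonneg x := by
      rcases eq_or_ne x 0 with rfl | hx
      · simp [show h 0 0 = 0 by simpa using hsmul 0 0 0]
      · exact (hpos x hx).le
    add_left x y z := by simp only [hsymm z, hadd, map_add]
    smul_left x y r := by simp only [hsymm y, hsmul, map_mul]
    definite x hx := by
      by_contra hx0
      have hxx : h x x = 0 := hx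
      simpa [hxx] using hpos x hx0 }

def standardSymplectic (m : ℕ) : Matrix (Fin 2 × Fin m) (Fin 2 × Fin m) ℂ :=
  Matrix.blockDiagonal fun _ => !![0, 1; -1, 0]

def finTwoProdEquiv (m : ℕ) : Fin 2 × Fin m ≃ Fin (2 * m) :=
  (Equiv.prodComm _ _).trans (finProdFinEquiv.trans (finCongr (mul_comm m 2)))

theorem finTwoProdEquiv_apply_val {m : ℕ} (p : Fin 2 × Fin m) :
    (finTwoProdEquiv m p : ℕ) = p.1 + 2 * p.2 := by
  simp [finTwoProdEquiv]

theorem standardSymplectic_symm_apply {m : ℕ} (i j : Fin (2 * m)) :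
    standardSymplectic m ((finTwoProdEquiv m).symm i) ((finTwoProdEquiv m).symm j) =
      if (i : ℕ) % 2 = 0 ∧ (j : ℕ) = (i : ℕ) + 1 then 1
      else if (j : ℕ) % 2 = 0 ∧ (i : ℕ) = (j : ℕ) + 1 then -1
      else 0 := by
  obtain ⟨⟨s, a⟩, rfl⟩ := (finTwoProdEquiv m).surjective i
  obtain ⟨⟨t, c⟩, rfl⟩ := (finTwoProdEquiv m).surjective j
  simp only [Equiv.symm_apply_apply, finTwoProdEquiv_apply_val, standardSymplectic,
    Matrix.blockDiagonal_apply]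
  fin_cases s <;> fin_cases t <;> simp [Fin.ext_iff] <;> split_ifs <;> first | rfl | omega

section InnerProductSpace

variable {E : Type*} [NormedAddCommGroup E] [InnerProductSpace ℂ E]

theorem exists_conjLinear_inner_eq [FiniteDimensional ℂ E] (B : E →ₗ[ℂ] E →ₗ[ℂ] ℂ) :
    ∃ J : E →ₗ⋆[ℂ] E, ∀ u w, ⟪J u, w⟫_ℂ = B u w :=
  ⟨(InnerProductSpace.toDual ℂ E).symm.toLinearEquiv.toLinearMap ∘ₛₗ
    (LinearMap.toContinuousLinearMap.toLinearMap ∘ₗ B), fun u w => by simp⟩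

def IsAntiunitary (J : E → E) : Prop :=
  ∀ x y, ⟪J x, J y⟫_ℂ = ⟪y, x⟫_ℂ

theorem compatible_iff_isAntiunitary {J : E → E} {ω : E → E → ℂ}
    (hJω : ∀ u w, ⟪J u, w⟫_ℂ = ω u w) :
    Compatible (fun x y : E => ⟪y, x⟫_ℂ) ω ↔ IsAntiunitary J := by
  have hPsi : Function.Injective (PsiH fun x y : E => ⟪y, x⟫_ℂ) :=
    fun x y hxy => ext_inner_right ℂ (congrFun hxy)
  have hinv (u : E) : Function.invFun (PsiH fun x y : E => ⟪y, x⟫_ℂ) (ω u) = J u := by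
    rw [show ω u = PsiH (fun x y : E => ⟪y, x⟫_ℂ) (J u) from funext fun w => (hJω u w).symm,
      Function.leftInverse_invFun hPsi]
  simp only [Compatible, dualMetric, hinv, IsAntiunitary]

theorem IsAntiunitary.of_basis {ι : Type*} [Fintype ι] (b : Basis ι ℂ E) (J : E →ₗ⋆[ℂ] E)
    (hb : ∀ i j, ⟪J (b i), J (b j)⟫_ℂ = ⟪b j, b i⟫_ℂ) : IsAntiunitary J := by
  intro x y
  rw [← b.sum_repr x, ← b.sum_repr y]
  simp only [map_sum, map_smulₛₗ, sum_inner, inner_sum, inner_smul_left, inner_smul_right, hb,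
    Complex.conj_conj, Finset.mul_sum]
  rw [Finset.sum_comm]
  exact Finset.sum_congr rfl fun j _ => Finset.sum_congr rfl fun i _ => by ring

theorem IsAntiunitary.inner_map_self_eq_zero {J : E → E} (hJ : IsAntiunitary J)
    (hJJ : ∀ x, J (J x) = -x) (x : E) : ⟪J x, x⟫_ℂ = 0 := by
  have h := hJ x (J x)
  rw [hJJ, inner_neg_right] at h
  linear_combination -h / 2

def pairFamily {ι : Type*} (J : E → E) (f : ι → E) : Fin 2 × ι → E :=
  fun p => ![f p.2, J (f p.2)] p.1

theorem orthonormal_pairFamily_iff {ι : Type*} {J : E → E} (hJ : IsAntiunitary J) {f : ι → E} :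
    Orthonormal ℂ (pairFamily J f) ↔ Orthonormal ℂ f ∧ ∀ i j, ⟪f i, J (f j)⟫_ℂ = 0 := by
  classical
  simp only [orthonormal_iff_ite, Prod.forall, Fin.forall_fin_two, pairFamily, Prod.mk.injEq,
    Matrix.cons_val_zero, Matrix.cons_val_one, hJ _ _, Fin.zero_eq_one_iff,
    true_and, false_and, if_false, OfNat.ofNat_ne_one, one_ne_zero]
  refine ⟨fun h => ⟨fun i => (h.1 i).1, fun i => (h.1 i).2⟩,
    fun ⟨hf, hfJ⟩ => ⟨fun i => ⟨hf i, hfJ i⟩, fun i => ⟨fun j => ?_, fun j => ?_⟩⟩⟩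
  · rw [← inner_conj_symm, hfJ, map_zero]
  · rw [hf]
    exact if_congr eq_comm rfl rfl

theorem IsAntiunitary.orthonormal_pairFamily_vecCons {J : E → E} (hJ : IsAntiunitary J)
    (hJJ : ∀ x, J (J x) = -x) {m : ℕ} {f : Fin m → E} (hf : Orthonormal ℂ (pairFamily J f))
    {u : E} (hu : ‖u‖ = 1) (huf : ∀ p, ⟪pairFamily J f p, u⟫_ℂ = 0) :
    Orthonormal ℂ (pairFamily J (Matrix.vecCons u f)) := by
  rw [orthonormal_pairFamily_iff hJ] at hf ⊢
  have hfu (i : Fin m) : ⟪u, f i⟫_ℂ = 0 := by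
    rw [← inner_conj_symm, show ⟪f i, u⟫_ℂ = 0 from huf (0, i), map_zero]
  have hJfu (i : Fin m) : ⟪u, J (f i)⟫_ℂ = 0 := by
    rw [← inner_conj_symm, show ⟪J (f i), u⟫_ℂ = 0 from huf (1, i), map_zero]
  have hfJu (i : Fin m) : ⟪f i, J u⟫_ℂ = 0 := by
    calc ⟪f i, J u⟫_ℂ = ⟪-J (J (f i)), J u⟫_ℂ := by rw [hJJ, neg_neg]
      _ = 0 := by rw [inner_neg_left, hJ, hJfu, neg_zero]
  have huJu : ⟪u, J u⟫_ℂ = 0 := by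
    rw [← inner_conj_symm, hJ.inner_map_self_eq_zero hJJ, map_zero]
  refine ⟨orthonormal_vecCons_iff.mpr ⟨hu, hfu, hf.1⟩, fun i j => ?_⟩
  cases i using Fin.cases <;> cases j using Fin.cases <;>
    simp only [Matrix.cons_val_zero, Matrix.cons_val_succ, huJu, hJfu, hfJu, hf.2]

theorem IsAntiunitary.exists_orthonormalBasis_of_pairFamily [FiniteDimensional ℂ E] {J : E → E}
    (hJ : IsAntiunitary J) (hJJ : ∀ x, J (J x) = -x) {m : ℕ} (f : Fin m → E)
    (hf : Orthonormal ℂ (pairFamily J f)) :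
    ∃ (n : ℕ) (b : OrthonormalBasis (Fin 2 × Fin n) ℂ E), ∀ a, b (1, a) = J (b (0, a)) := by
  set K := Submodule.span ℂ (Set.range (pairFamily J f))
  by_cases hK : K = ⊤
  · exact ⟨m, OrthonormalBasis.mk hf hK.ge, fun a => by simp [pairFamily]⟩
  have hcard : 2 * m < finrank ℂ E := by
    have hKm : finrank ℂ K = 2 * m := by
      rw [finrank_span_eq_card hf.linearIndependent]
      simp
    exact hKm ▸ lt_of_le_of_ne (Submodule.finrank_le K)
      fun h => hK (Submodule.eq_top_of_finrank_eq h)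
  obtain ⟨x, hxK, hx0⟩ :=
    Submodule.exists_mem_ne_zero_of_ne_bot (Submodule.orthogonal_eq_bot_iff.not.mpr hK)
  have huf (p : Fin 2 × Fin m) : ⟪pairFamily J f p, (‖x‖⁻¹ : ℂ) • x⟫_ℂ = 0 :=
    Submodule.inner_right_of_mem_orthogonal (Submodule.subset_span (Set.mem_range_self p))
      (Kᗮ.smul_mem _ hxK)
  exact IsAntiunitary.exists_orthonormalBasis_of_pairFamily hJ hJJ _
    (hJ.orthonormal_pairFamily_vecCons hJJ hf (norm_smul_inv_norm hx0) huf)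
termination_by finrank ℂ E - 2 * m
decreasing_by omega

theorem IsAntiunitary.exists_orthonormalBasis [FiniteDimensional ℂ E] {J : E → E}
    (hJ : IsAntiunitary J) (hJJ : ∀ x, J (J x) = -x) :
    ∃ (n : ℕ) (b : OrthonormalBasis (Fin 2 × Fin n) ℂ E), ∀ a, b (1, a) = J (b (0, a)) :=
  hJ.exists_orthonormalBasis_of_pairFamily hJJ ![] (Orthonormal.of_isEmpty _)

theorem OrthonormalBasis.inner_map_eq_standardSymplectic_iff {m : ℕ}
    (b : OrthonormalBasis (Fin 2 × Fin m) ℂ E) (J : E → E) :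
    (∀ p q, ⟪J (b p), b q⟫_ℂ = standardSymplectic m p q) ↔
      ∀ a, J (b (0, a)) = b (1, a) ∧ J (b (1, a)) = -b (0, a) := by
  have hb := orthonormal_iff_ite.mp b.orthonormal
  have key (a : Fin m) (q : Fin 2 × Fin m) :
      ⟪b (1, a), b q⟫_ℂ = standardSymplectic m (0, a) q ∧
        ⟪-b (0, a), b q⟫_ℂ = standardSymplectic m (1, a) q := by
    obtain ⟨t, c⟩ := q
    fin_cases t <;> simp [hb, standardSymplectic, Matrix.blockDiagonal_apply, eq_comm, neg_ite]
  constructor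
  · intro h a
    constructor <;> refine InnerProductSpace.ext_inner_right_basis b.toBasis fun q => ?_ <;>
      simp only [OrthonormalBasis.coe_toBasis, h, key]
  · rintro h ⟨s, a⟩ q
    fin_cases s <;> simp [h, key]

theorem isAntiunitary_iff_exists_orthonormalBasis [FiniteDimensional ℂ E] (J : E →ₗ⋆[ℂ] E)
    (halt : ∀ x, ⟪J x, x⟫_ℂ = 0) :
    IsAntiunitary J ↔ ∃ (m : ℕ) (b : OrthonormalBasis (Fin 2 × Fin m) ℂ E),
      ∀ p q, ⟪J (b p), b q⟫_ℂ = standardSymplectic m p q := by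
  have hskew (x y : E) : ⟪J x, y⟫_ℂ = -⟪J y, x⟫_ℂ := by
    have h := halt (x + y)
    simp only [map_add, inner_add_left, inner_add_right, halt] at h
    linear_combination h
  constructor
  · intro hJ
    have hJJ (x : E) : J (J x) = -x :=
      ext_inner_right ℂ fun w => by rw [hskew, hJ, inner_neg_left]
    obtain ⟨m, b, hb⟩ := hJ.exists_orthonormalBasis hJJ
    exact ⟨m, b, (b.inner_map_eq_standardSymplectic_iff J).mpr
      fun a => ⟨(hb a).symm, by rw [hb, hJJ]⟩⟩
  · rintro ⟨m, b, hb⟩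
    have hJb := (b.inner_map_eq_standardSymplectic_iff J).mp hb
    refine IsAntiunitary.of_basis b.toBasis J fun p q => ?_
    obtain ⟨s, a⟩ := p
    obtain ⟨t, c⟩ := q
    fin_cases s <;> fin_cases t <;>
      simp [hJb, orthonormal_iff_ite.mp b.orthonormal, eq_comm]

theorem exists_orthonormalBasis_iff_exists_basis (ω : E → E → ℂ) :
    (∃ (m : ℕ) (b : OrthonormalBasis (Fin 2 × Fin m) ℂ E),
        ∀ p q, ω (b p) (b q) = standardSymplectic m p q) ↔
      ∃ (m : ℕ) (v : Basis (Fin (2 * m)) ℂ E),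
        (∀ i j, ⟪v j, v i⟫_ℂ = if i = j then 1 else 0) ∧
        (∀ i j : Fin (2 * m),
          ω (v i) (v j) =
            if (i : ℕ) % 2 = 0 ∧ (j : ℕ) = (i : ℕ) + 1 then 1
            else if (j : ℕ) % 2 = 0 ∧ (i : ℕ) = (j : ℕ) + 1 then -1
            else 0) := by
  constructor
  · rintro ⟨m, b, hb⟩
    refine ⟨m, (b.reindex (finTwoProdEquiv m)).toBasis, fun i j => ?_, fun i j => ?_⟩
    · simp [orthonormal_iff_ite.mp b.orthonormal, eq_comm]
    · simp [hb, standardSymplectic_symm_apply]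
  · rintro ⟨m, v, hv, hω⟩
    have hvo : Orthonormal ℂ v :=
      orthonormal_iff_ite.mpr fun i j => by rw [hv]; exact if_congr eq_comm rfl rfl
    refine ⟨m, (v.toOrthonormalBasis hvo).reindex (finTwoProdEquiv m).symm, fun p q => ?_⟩
    simp [hω, ← standardSymplectic_symm_apply]

end InnerProductSpace

/-- A Hermitian metric `h` is compatible with a symplectic form `ω` iff there exists
a basis `v_0, …, v_{2m-1}` of `V` (indices starting at `0`, consecutive pairs
`(v_{2i}, v_{2i+1})`) which is orthonormal with respect to `h` and symplectic with
respect to `ω`: `ω (v_{2i}) (v_{2i+1}) = 1 = - ω (v_{2i+1}) (v_{2i})` and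
`ω (v_i) (v_j) = 0` for all other pairs. -/
theorem compatible_symplectic_iff_exists_unitary_symplectic_basis
    (h ω : V → V → ℂ) (hh : IsHermitianMetric h) (hω : IsSymplecticForm ω) :
    Compatible h ω ↔
      ∃ (m : ℕ) (v : Module.Basis (Fin (2 * m)) ℂ V),
        (∀ i j, h (v i) (v j) = if i = j then 1 else 0) ∧
        (∀ i j : Fin (2 * m),
          ω (v i) (v j) =
            if (i : ℕ) % 2 = 0 ∧ (j : ℕ) = (i : ℕ) + 1 then 1
            else if (j : ℕ) % 2 = 0 ∧ (i : ℕ) = (j : ℕ) + 1 then -1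
            else 0) := by
  let _ : NormedAddCommGroup V := hh.innerProductCore.toNormedAddCommGroup
  let _ : InnerProductSpace ℂ V := InnerProductSpace.ofCore hh.innerProductCore.toCore
  obtain ⟨ω_add_left, ω_smul_left, ω_add_right, ω_smul_right, ω_self, -⟩ := hω
  obtain ⟨J, hJω⟩ := exists_conjLinear_inner_eq
    (LinearMap.mk₂ ℂ ω ω_add_left ω_smul_left ω_add_right ω_smul_right)
  replace hJω : ∀ u w, ⟪J u, w⟫_ℂ = ω u w := hJω
  calc Compatible h ω ↔ IsAntiunitary J := compatible_iff_isAntiunitary hJω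
    _ ↔ _ := isAntiunitary_iff_exists_orthonormalBasis J fun x => (hJω x x).trans (ω_self x)
    _ ↔ ∃ (m : ℕ) (b : OrthonormalBasis (Fin 2 × Fin m) ℂ V),
          ∀ p q, ω (b p) (b q) = standardSymplectic m p q := by simp only [hJω]
    _ ↔ _ := exists_orthonormalBasis_iff_exists_basis ω
end
end
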